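/- arXiv:2108.13441 — 9 statements merged into one kernel-verified Lean document; each statement's English description precedes it below -/
import Mathlib

section
/- Let β ≥ 3 and suppose a ≤ b < β are positive integers with a + b = β + x for some 1 ≤ x < β, and a·b = x·β + 1 (i.e., the two-digit base-β representations of a+b and a·b are reverses of each other). Then a = b = β - 1 and x = β - 2. -/
theorem stmt_2 (β a b x : ℕ) (hβ : 3 ≤ β) (ha0 : 0 < a) (hab : a ≤ b)
    (hb : b < β) (hx1 : 1 ≤ x) (hx2 : x < β)
    (hsum : a + b = β + x) (hprod : a * b = x * β + 1) :
    a = β - 1 ∧ b = β - 1 ∧ x = β - 2 := by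
  have ha' : a < β := lt_of_le_of_lt hab hb
  have hs : (a:ℤ) + b = β + x := by exact_mod_cast hsum
  have hp : (a:ℤ) * b = x * β + 1 := by exact_mod_cast hprod
  have h1 : ((β:ℤ) - a) * ((β:ℤ) - b) = 1 := by linear_combination hp - (β:ℤ) * hs
  have ha1 : (1:ℤ) ≤ (β:ℤ) - a := by omega
  have hb1 : (1:ℤ) ≤ (β:ℤ) - b := by omega
  have hpa : (β:ℤ) - a = 1 := by nlinarith
  have hpb : (β:ℤ) - b = 1 := by nlinarith
  have : (a:ℤ) = β - 1 := by omega
  have : (b:ℤ) = β - 1 := by omega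
  constructor
  · omega
  constructor
  · omega
  · omega
end

section
/- Suppose a ≤ b is a reversed sum-product pair for base β with a > β. Then a < 2β and b < β(β+1). -/
/-- `(a, b)` is a reversed sum-product pair for base `β`: `a ≤ b` are positive
integers and the base-`β` digit sequence of `a * b` is the reverse of that of
`a + b` (in particular they have the same number of digits). -/
def IsRSP (β a b : ℕ) : Prop :=
  0 < a ∧ a ≤ b ∧ Nat.digits β (a * b) = (Nat.digits β (a + b)).reverse

theorem stmt_3 (β a b : ℕ) (hβ : 2 ≤ β) (h : IsRSP β a b) (ha : β < a) :
    a < 2 * β ∧ b < β * (β + 1) := by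
  obtain ⟨hapos, hab, hdig⟩ := h
  have hb : 0 < b := lt_of_lt_of_le hapos hab
  have hβ1 : 1 < β := hβ
  have hsum : 0 < a + b := by omega
  set n := (Nat.digits β (a + b)).length with hn
  have hlen : (Nat.digits β (a * b)).length = n := by
    rw [hdig, List.length_reverse]
  have hlt : a * b < β ^ n := by
    rw [← hlen]; exact Nat.lt_base_pow_length_digits hβ1
  have hge : β ^ n ≤ β * (a + b) :=
    Nat.base_pow_length_digits_le β (a + b) hβ1 (by omega)
  have key : a * b < β * (a + b) := lt_of_lt_of_le hlt hge
  have h1 : a < 2 * β := by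
    have : a * b < 2 * β * b := by nlinarith
    exact Nat.lt_of_mul_lt_mul_right this
  refine ⟨h1, ?_⟩
  by_contra hc
  push_neg at hc
  nlinarith [Nat.mul_le_mul (show β + 1 ≤ a by omega) hc]
end

section
/- There is no reversed sum-product pair (a,b) for any base β ≥ 2 with a > β. Equivalently, every reversed sum-product pair a ≤ b for base β satisfies a < β. -/
instance (β a b : ℕ) : Decidable (IsRSP β a b) :=
  inferInstanceAs (Decidable (0 < a ∧ a ≤ b ∧ _))

section Arithmetic

variable {β a b : ℕ}

theorem lt_two_mul_of_mul_lt (hab : a ≤ b) (h : a * b < β * (a + b)) : a < 2 * β := by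
  nlinarith

theorem add_lt_succ_sq_of_mul_lt (hab : a ≤ b) (hβa : β < a) (h : a * b < β * (a + b)) :
    a + b < (β + 1) ^ 2 := by
  have ha := lt_two_mul_of_mul_lt hab h
  nlinarith

theorem eq_succ_of_sq_le_add (hβ : 5 ≤ β) (hab : a ≤ b) (hβa : β < a) (hS : β ^ 2 ≤ a + b)
    (h : a * b < β * (a + b)) : a = β + 1 := by
  have ha := lt_two_mul_of_mul_lt hab h
  nlinarith

theorem base_succ_mul_ne_reverse {s₀ s₁ s₂ : ℕ} (hβ : 2 ≤ β) (hs₀ : s₀ < β) (hs₂ : 0 < s₂)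
    (hS : β + 1 + b = s₀ + β * s₁ + β ^ 2 * s₂) : (β + 1) * b ≠ s₂ + β * s₁ + β ^ 2 * s₀ := by
  intro hP
  -- `hP` and `(β + 1) * hS` combine to `s₀ (β + 1 - β²) + β² s₁ + s₂ (β³ + β² - 1) = (β + 1)²`,
  -- whose left side is at least `3 β² - 2`.
  have hS' : (β + 1) * (β + 1 + b) = (β + 1) * (s₀ + β * s₁ + β ^ 2 * s₂) := by rw [hS]
  zify at *
  nlinarith [mul_nonneg (by linarith : (0:ℤ) ≤ β - 1 - s₀) (by nlinarith : (0:ℤ) ≤ β ^ 2 - β - 1),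
    mul_nonneg (Int.natCast_nonneg s₁) (sq_nonneg (β : ℤ)),
    mul_nonneg (by linarith : (0:ℤ) ≤ s₂ - 1) (by nlinarith : (0:ℤ) ≤ β ^ 3 + β ^ 2 - 1)]

end Arithmetic

namespace IsRSP

variable {β a b : ℕ}

theorem add_ne_zero (h : IsRSP β a b) : a + b ≠ 0 :=
  (Nat.add_pos_left h.1 b).ne'

theorem mul_ne_zero (h : IsRSP β a b) : a * b ≠ 0 :=
  Nat.mul_ne_zero h.1.ne' (h.1.trans_le h.2.1).ne'

theorem length_digits_mul (h : IsRSP β a b) :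
    (β.digits (a * b)).length = (β.digits (a + b)).length := by
  rw [h.2.2, List.length_reverse]

theorem mul_lt_base_mul_add (hβ : 1 < β) (h : IsRSP β a b) : a * b < β * (a + b) :=
  calc a * b < β ^ (β.digits (a * b)).length := Nat.lt_base_pow_length_digits hβ
    _ = β ^ (β.digits (a + b)).length := by rw [h.length_digits_mul]
    _ ≤ β * (a + b) := Nat.base_pow_length_digits_le β _ hβ h.add_ne_zero

theorem mul_mod_base_ne_zero (hβ : 1 < β) (h : IsRSP β a b) : a * b % β ≠ 0 := by
  rw [← Nat.head!_digits hβ.ne', h.2.2, List.head!_eq_head?_getD, List.head?_reverse,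
    List.getLast?_eq_some_getLast (Nat.digits_ne_nil_iff_ne_zero.mpr h.add_ne_zero)]
  exact Nat.getLast_digit_ne_zero β h.add_ne_zero

theorem length_digits_add_eq_three (hβ : 3 ≤ β) (h : IsRSP β a b) (hβa : β < a)
    (hS : a + b < (β + 1) ^ 2) : (β.digits (a + b)).length = 3 := by
  have hβ1 : 1 < β := by omega
  refine le_antisymm ((Nat.digits_length_le_iff hβ1 _).mpr (by nlinarith)) ?_
  rw [← h.length_digits_mul, ← not_lt, Nat.lt_succ_iff, Nat.digits_length_le_iff hβ1, not_lt]
  nlinarith [h.2.1]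

theorem exists_three_digits (hβ : 1 < β) (h : IsRSP β a b)
    (hlen : (β.digits (a + b)).length = 3) :
    ∃ s₀ s₁ s₂, s₀ < β ∧ 0 < s₂ ∧
      a + b = s₀ + β * s₁ + β ^ 2 * s₂ ∧ a * b = s₂ + β * s₁ + β ^ 2 * s₀ := by
  obtain ⟨s₀, s₁, s₂, hS⟩ := List.length_eq_three.mp hlen
  have hP : β.digits (a * b) = [s₂, s₁, s₀] := by rw [h.2.2, hS]; rfl
  have hs₂ : s₂ ≠ 0 := by simpa [hS] using Nat.getLast_digit_ne_zero β h.add_ne_zero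
  refine ⟨s₀, s₁, s₂, Nat.digits_lt_base (m := a + b) hβ (by simp [hS]),
    Nat.pos_of_ne_zero hs₂, ?_, ?_⟩
  · rw [← Nat.ofDigits_digits β (a + b), hS]
    simp only [Nat.ofDigits, Nat.cast_id, mul_zero, add_zero]
    ring
  · rw [← Nat.ofDigits_digits β (a * b), hP]
    simp only [Nat.ofDigits, Nat.cast_id, mul_zero, add_zero]
    ring

theorem lt_base_of_base_le_four (hβ : β ≤ 4) (h : IsRSP β a b) (hS : a + b < (β + 1) ^ 2) :
    a < β := by
  have hsmall : ∀ β < 5, ∀ b < 25, ∀ a < 25, IsRSP β a b → a + b < (β + 1) ^ 2 → a < β := by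
    decide
  exact hsmall β (by omega) b (by nlinarith) a (by nlinarith) h hS

end IsRSP

theorem stmt_5 (β a b : ℕ) (hβ : 2 ≤ β) (h : IsRSP β a b) : a < β := by
  by_contra! hle
  have hβa : β < a := hle.lt_of_ne fun e => h.mul_mod_base_ne_zero hβ (by simp [← e])
  have hmul := h.mul_lt_base_mul_add hβ
  have hS := add_lt_succ_sq_of_mul_lt h.2.1 hβa hmul
  rcases le_or_gt β 4 with hβ4 | hβ4
  · exact hβa.not_gt (h.lt_base_of_base_le_four hβ4 hS)
  obtain ⟨s₀, s₁, s₂, hs₀, hs₂, hSd, hPd⟩ :=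
    h.exists_three_digits hβ (h.length_digits_add_eq_three (by omega) hβa hS)
  obtain rfl : a = β + 1 := eq_succ_of_sq_le_add hβ4 h.2.1 hβa (by nlinarith) hmul
  exact base_succ_mul_ne_reverse hβ hs₀ hs₂ hSd hPd
end

section
/- If (a,b) is a reversed sum-product pair for base β with a < β < b, then b and a+b have the same number of base-β digits. -/
private lemma ofDigits_replicate_zero (β k : ℕ) :
    Nat.ofDigits β (List.replicate k 0) = 0 := by
  induction k with
  | zero => simp
  | succ k ih => simp [List.replicate_succ, Nat.ofDigits_cons, ih]

private lemma digits_pow_add (β : ℕ) (hβ : 2 ≤ β) :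
    ∀ L r, r < β → Nat.digits β (β^(L+1) + r) = r :: (List.replicate L 0 ++ [1]) := by
  intro L
  induction L with
  | zero =>
    intro r hr
    rw [Nat.digits_def' (show 1 < β by omega) (by positivity)]
    have h1 : (β ^ 1 + r) % β = r := by
      rw [pow_one, Nat.add_mod_left, Nat.mod_eq_of_lt hr]
    have h2 : (β ^ 1 + r) / β = 1 := by
      rw [pow_one, Nat.add_div_left _ (by omega), Nat.div_eq_of_lt hr]
    rw [h1, h2]
    simp [Nat.digits_of_lt β 1 one_ne_zero (by omega)]
  | succ L ih =>
    intro r hr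
    have he : β ^ (L + 2) + r = r + β ^ (L + 1) * β := by ring
    rw [Nat.digits_def' (show 1 < β by omega) (by positivity), he,
      Nat.add_mul_mod_self_right, Nat.mod_eq_of_lt hr,
      Nat.add_mul_div_right _ _ (show 0 < β by omega), Nat.div_eq_of_lt hr, zero_add]
    have := ih 0 (by omega)
    rw [add_zero] at this
    rw [this]
    simp [List.replicate_succ]

theorem stmt_8 (β a b : ℕ) (hβ : 2 ≤ β) (h : IsRSP β a b)
    (ha : a < β) (hb : β < b) :
    (Nat.digits β b).length = (Nat.digits β (a + b)).length := by
  obtain ⟨ha0, hab, hrev⟩ := h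
  set L := (Nat.digits β b).length with hL
  have hβ1 : 1 < β := by omega
  have hbL : b < β ^ L := Nat.lt_base_pow_length_digits hβ1
  have hL2 : 2 ≤ L := by
    by_contra hc
    have : b < β ^ 1 := by
      calc b < β ^ L := hbL
      _ ≤ β ^ 1 := Nat.pow_le_pow_right (by omega) (by omega)
    simp [pow_one] at this; omega
  -- length of a+b is ≥ L
  have hge : L ≤ (Nat.digits β (a + b)).length :=
    Nat.le_digits_len_le β b (a + b) (by omega)
  -- length of a+b is ≤ L+1
  have hle : (Nat.digits β (a + b)).length ≤ L + 1 := by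
    have h1 : a + b < β ^ (L + 1) := by
      have : β ^ L * 2 ≤ β ^ L * β := Nat.mul_le_mul_left _ hβ
      calc a + b < β + β ^ L := by omega
        _ ≤ β ^ L + β ^ L := by
            have : β ≤ β ^ L := by
              calc β = β ^ 1 := (pow_one β).symm
              _ ≤ β ^ L := Nat.pow_le_pow_right (by omega) (by omega)
            omega
        _ ≤ β ^ (L + 1) := by rw [pow_succ]; omega
    by_contra hc
    have := Nat.base_pow_length_digits_le β (a+b) hβ1 (by omega)
    have h2 : β ^ (L + 2) ≤ β ^ (Nat.digits β (a+b)).length :=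
      Nat.pow_le_pow_right (by omega) (by omega)
    have h3 : β * (a + b) < β * β ^ (L + 1) :=
      (Nat.mul_lt_mul_left (show 0 < β by omega)).mpr h1
    have h4 : β * β ^ (L + 1) = β ^ (L + 2) := by ring
    omega
  by_contra hne
  have hlen : (Nat.digits β (a + b)).length = L + 1 := by omega
  -- so a + b ≥ β ^ L
  have habge : β ^ L ≤ a + b := by
    by_contra hc
    have h1 := Nat.base_pow_length_digits_le β (a+b) hβ1 (by omega)
    rw [hlen] at h1
    have h2 : β * (a + b) < β * β ^ L :=
      (Nat.mul_lt_mul_left (show 0 < β by omega)).mpr (by omega)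
    have h3 : β * β ^ L = β ^ (L + 1) := by ring
    omega
  set r := a + b - β ^ L with hr
  have hrβ : r < β := by
    have : b < β ^ L := hbL
    omega
  have habeq : a + b = β ^ L + r := by omega
  -- digits of a + b
  clear_value L
  obtain ⟨L', rfl⟩ : ∃ L', L = L' + 1 := ⟨L - 1, by omega⟩
  have hdig : Nat.digits β (a + b) = r :: (List.replicate L' 0 ++ [1]) := by
    rw [habeq]; exact digits_pow_add β hβ _ r hrβ
  -- compute a * b
  have hab_eq : a * b = 1 + β ^ (L' + 1) * r := by
    have h0 := Nat.ofDigits_digits β (a * b)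
    rw [hrev, hdig] at h0
    simp [List.reverse_cons, List.reverse_append, Nat.ofDigits_append, Nat.ofDigits_cons,
      Nat.ofDigits_nil, ofDigits_replicate_zero] at h0
    rw [← h0]; ring
  -- now derive contradiction
  have key : ((β:ℤ) ^ (L' + 1) - b) * ((b : ℤ) - r) = 1 := by
    have h1 : (a : ℤ) + b = (β:ℤ) ^ (L' + 1) + r := by exact_mod_cast habeq
    have h2 : (a : ℤ) * b = 1 + (β:ℤ) ^ (L' + 1) * r := by exact_mod_cast hab_eq
    nlinarith [h1, h2]
  have hx1 : (β:ℤ) ^ (L' + 1) - b = 1 ∧ (b:ℤ) - r = 1 := by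
    have hxpos : 0 < (β:ℤ) ^ (L' + 1) - b := by
      have : (b:ℤ) < (β:ℤ) ^ (L' + 1) := by exact_mod_cast hbL
      omega
    rcases Int.mul_eq_one_iff_eq_one_or_neg_one.mp key with ⟨h1, h2⟩ | ⟨h1, h2⟩
    · exact ⟨h1, h2⟩
    · omega
  obtain ⟨hx, hy⟩ := hx1
  have hb1 : (b:ℤ) = (β:ℤ) ^ (L' + 1) - 1 := by omega
  have hr1 : (r:ℤ) = (b:ℤ) - 1 := by omega
  have hβ2 : (β:ℤ) ^ 2 ≤ (β:ℤ) ^ (L' + 1) := by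
    apply pow_le_pow_right₀ (by exact_mod_cast (by omega : 1 ≤ β)) (by omega)
  have hrb : (r:ℤ) < β := by exact_mod_cast hrβ
  have h6 : (β:ℤ) ^ 2 < β + 2 := by omega
  have hβi : (2:ℤ) ≤ β := by exact_mod_cast hβ
  nlinarith [h6, hβi]
end

section
/- Suppose a < β < b and b = β^ℓ - c for some ℓ ≥ 2 and 1 ≤ c < a, so that a+b has one more base-β digit than b. Then (a,b) is not a reversed sum-product pair for base β. (The key algebraic step: the reversal condition forces c·(β^ℓ - a) = 1, which is impossible since β^ℓ > a+1.) -/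
namespace Nat

theorem digits_add_base_pow_succ_mul {β x y : ℕ} (n : ℕ) (hx0 : x ≠ 0) (hx : x < β)
    (hy0 : y ≠ 0) (hy : y < β) :
    digits β (x + β ^ (n + 1) * y) = x :: List.replicate n 0 ++ [y] := by
  have h1β : 1 < β := by omega
  have key := digits_append_zeroes_append_digits (k := n) (n := x) h1β (Nat.pos_of_ne_zero hy0)
  rw [digits_of_lt β x hx0 hx, digits_of_lt β y hy0 hy, List.length_singleton,
    add_comm 1 n] at key
  simpa using key.symm

theorem reverse_digits_add_base_pow_succ_mul {β x y : ℕ} (n : ℕ) (hx0 : x ≠ 0) (hx : x < β)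
    (hy0 : y ≠ 0) (hy : y < β) :
    (digits β (x + β ^ (n + 1) * y)).reverse = digits β (y + β ^ (n + 1) * x) := by
  simp [digits_add_base_pow_succ_mul n hx0 hx hy0 hy, digits_add_base_pow_succ_mul n hy0 hy hx0 hx]

end Nat

theorem mul_sub_eq_one_add_mul_sub_iff {a c P : ℕ} (hca : c ≤ a) (haP : a ≤ P) :
    a * (P - c) = 1 + P * (a - c) ↔ c * (P - a) = 1 := by
  zify [hca, haP, hca.trans haP]
  constructor <;> intro h <;> linarith

theorem stmt_9_general (β a b c ℓ : ℕ) (ha : a < β)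
    (hb : β < b) (hc2 : c < a)
    (hbeq : b = β ^ ℓ - c) :
    ¬ IsRSP β a b := by
  rintro ⟨-, -, h⟩
  obtain ⟨n, rfl⟩ : ∃ n, ℓ = n + 1 :=
    Nat.exists_eq_add_one.mpr (Nat.pos_of_ne_zero fun h0 => by simp [h0] at hbeq; omega)
  set P := β ^ (n + 1)
  have hsum : a + b = (a - c) + P * 1 := by omega
  rw [hsum, Nat.reverse_digits_add_base_pow_succ_mul n (by omega) (by omega) one_ne_zero
    (by omega), Nat.digits_inj_iff, hbeq] at h
  have hcP : c * (P - a) = 1 := (mul_sub_eq_one_add_mul_sub_iff hc2.le (by omega)).mp h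
  rw [mul_eq_one] at hcP
  omega

theorem stmt_9 (β a b c ℓ : ℕ) (hβ : 2 ≤ β) (ha0 : 0 < a) (ha : a < β)
    (hb : β < b) (hℓ : 2 ≤ ℓ) (hc1 : 1 ≤ c) (hc2 : c < a)
    (hbeq : b = β ^ ℓ - c) :
    ¬ IsRSP β a b :=
  stmt_9_general β a b c ℓ ha hb hc2 hbeq
end

section
/- If (a,b) is a reversed sum-product pair for base β with a < β < b, then the last (least significant) base-β digit b₀ of b satisfies b₀ < β - a. Consequently, no carry occurs in any column when computing the sum a + b in base β, and a+b has the same leading digit as b. -/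
namespace Nat

theorem digits_add_base_pow_succ {β r : ℕ} (hβ : 1 < β) (hr : r < β) (k : ℕ) :
    digits β (r + β ^ (k + 1)) = r :: (List.replicate k 0 ++ [1]) := by
  rw [digits_def' hβ (by positivity), pow_succ', add_mul_mod_self_left, mod_eq_of_lt hr,
    add_mul_div_left _ _ (by omega), div_eq_of_lt hr, zero_add, ← mul_one (β ^ k),
    digits_base_pow_mul hβ one_pos, digits_of_lt β 1 one_ne_zero hβ]

theorem ofDigits_reverse_digits_add_base_pow_succ {β r : ℕ} (hβ : 1 < β) (hr : r < β) (k : ℕ) :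
    ofDigits β (digits β (r + β ^ (k + 1))).reverse = 1 + β ^ (k + 1) * r := by
  rw [digits_add_base_pow_succ hβ hr]
  simp [ofDigits_cons, ofDigits_append, ofDigits_replicate_zero, pow_succ', mul_assoc]

theorem ofDigits_reverse_cons_lt {β d : ℕ} {t : List ℕ} (hβ : 1 < β) (ht : ∀ x ∈ t, x < β) :
    ofDigits β (d :: t).reverse < (d + 1) * β ^ t.length := by
  have hlow := ofDigits_lt_base_pow_length hβ (l := t.reverse) (by simpa using ht)
  rw [List.length_reverse] at hlow
  rw [List.reverse_cons, ofDigits_append, ofDigits_singleton, List.length_reverse]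
  linarith

theorem digits_add_of_mod_add_lt {β c n : ℕ} (hβ : 1 < β) (h : n % β + c < β) (hn : n ≠ 0) :
    digits β (c + n) = (n % β + c) :: (digits β n).tail := by
  have hsplit : c + n = (n % β + c) + β * (n / β) := by have := mod_add_div n β; omega
  rw [digits_def' hβ (by omega : 0 < c + n), digits_def' hβ (by omega : 0 < n), List.tail_cons,
    hsplit, add_mul_mod_self_left, mod_eq_of_lt h, add_mul_div_left _ _ (by omega),
    div_eq_of_lt h, zero_add]

theorem mod_lt_sub_of_le_add_mod {β a b : ℕ} (ha : a < β) (h : a ≤ (a + b) % β) :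
    b % β < β - a := by
  by_contra! hc
  have hb := mod_lt b (by omega : 0 < β)
  rw [add_mod, mod_eq_of_lt ha, mod_eq_sub_mod (by omega), mod_eq_of_lt (by omega)] at h
  omega

end Nat

open Nat

namespace IsRSP

variable {β a b : ℕ}

theorem log_add_eq (hβ : 1 < β) (h : IsRSP β a b) (ha : a < β) (hb : β ≤ b) :
    log β (a + b) = log β b := by
  obtain ⟨-, -, hrev⟩ := h
  set k := log β b
  refine le_antisymm ?_ (log_mono_right (by omega))
  by_contra! hlt
  have hP : β ^ (k + 1) ≤ a + b := pow_le_of_le_log (by omega) hlt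
  have hbP : b < β ^ (k + 1) := lt_pow_succ_log_self hβ b
  have hβP : β * β ≤ β ^ (k + 1) := by
    rw [← sq]; exact pow_le_pow_right₀ (by omega) (by have := log_pos hβ hb; omega)
  obtain ⟨r, hr⟩ : ∃ r, a + b = r + β ^ (k + 1) := ⟨a + b - β ^ (k + 1), by omega⟩
  have hmul : a * b = 1 + β ^ (k + 1) * r := by
    rw [← ofDigits_digits β (a * b), hrev, hr,
      ofDigits_reverse_digits_add_base_pow_succ hβ (by omega)]
  -- these two equations force `(a - r) * (β ^ (k + 1) - a) = 1`, with both factors positive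
  nlinarith

theorem le_add_mod (hβ : 1 < β) (h : IsRSP β a b) (ha : a < β) (hb : β ≤ b) :
    a ≤ (a + b) % β := by
  have hlog := h.log_add_eq hβ ha hb
  obtain ⟨-, -, hrev⟩ := h
  have hdig : digits β (a + b) = (a + b) % β :: digits β ((a + b) / β) :=
    digits_def' hβ (by omega)
  have hlen : (digits β ((a + b) / β)).length = log β b := by
    have := length_digits β (a + b) hβ (by omega)
    rw [hdig, hlog] at this
    simpa using this
  have hlt : a * b < ((a + b) % β + 1) * β ^ log β b := by
    rw [← ofDigits_digits β (a * b), hrev, hdig, ← hlen]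
    exact ofDigits_reverse_cons_lt hβ (fun _ => digits_lt_base hβ)
  have hab : a * β ^ log β b ≤ a * b := Nat.mul_le_mul_left a (pow_log_le_self β (by omega))
  by_contra! hc
  have := Nat.mul_le_mul_right (β ^ log β b) (show (a + b) % β + 1 ≤ a by omega)
  omega

end IsRSP

theorem stmt_10 (β a b : ℕ) (hβ : 2 ≤ β) (h : IsRSP β a b)
    (ha : a < β) (hb : β < b) :
    b % β < β - a ∧
    Nat.digits β (a + b) = (b % β + a) :: (Nat.digits β b).tail ∧
    (Nat.digits β (a + b)).getLast? = (Nat.digits β b).getLast? := by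
  have hcarry : b % β < β - a := mod_lt_sub_of_le_add_mod ha (h.le_add_mod hβ ha hb.le)
  have hdigits := digits_add_of_mod_add_lt (c := a) hβ (by omega) (by omega : b ≠ 0)
  refine ⟨hcarry, hdigits, ?_⟩
  have hhigh : digits β (b / β) ≠ [] :=
    digits_ne_nil_iff_ne_zero.mpr (Nat.div_pos hb.le (by omega)).ne'
  rw [hdigits, digits_def' hβ (by omega : 0 < b), List.tail_cons]
  simp [List.getLast?_cons, List.getLast?_eq_some_getLast hhigh]
end

section
/- For every integer n ≥ 1, the pair (2, 5·10^n - 3) is a reversed sum-product pair for base 10: the decimal digits of 2 + (5·10^n - 3) = 5·10^n - 1 are the reverse of the decimal digits of 2·(5·10^n - 3) = 10^{n+1} - 6, and both have n+1 digits. -/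
lemma digits_pow_sub_one (k : ℕ) : Nat.digits 10 (10 ^ k - 1) = List.replicate k 9 := by
  induction k with
  | zero => simp
  | succ k ih =>
    have hk : 1 ≤ 10 ^ k := Nat.one_le_pow _ _ (by norm_num)
    have h : 10 ^ (k + 1) - 1 = 9 + 10 * (10 ^ k - 1) := by
      rw [pow_succ]; omega
    rw [h, Nat.digits_def' (by norm_num : 1 < 10) (by omega)]
    have h1 : (9 + 10 * (10 ^ k - 1)) % 10 = 9 := by omega
    have h2 : (9 + 10 * (10 ^ k - 1)) / 10 = 10 ^ k - 1 := by omega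
    rw [h1, h2, ih, List.replicate_succ]

lemma digits_sum (n : ℕ) (hn : 1 ≤ n) :
    Nat.digits 10 (5 * 10 ^ n - 1) = List.replicate n 9 ++ [4] := by
  induction n with
  | zero => omega
  | succ n ih =>
    rcases Nat.eq_or_lt_of_le hn with h | h
    · norm_num [← h]
    · have hn' : 1 ≤ n := by omega
      have hk : 1 ≤ 10 ^ n := Nat.one_le_pow _ _ (by norm_num)
      have h : 5 * 10 ^ (n + 1) - 1 = 9 + 10 * (5 * 10 ^ n - 1) := by
        rw [pow_succ]; omega
      rw [h, Nat.digits_def' (by norm_num : 1 < 10) (by omega)]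
      have h1 : (9 + 10 * (5 * 10 ^ n - 1)) % 10 = 9 := by omega
      have h2 : (9 + 10 * (5 * 10 ^ n - 1)) / 10 = 5 * 10 ^ n - 1 := by omega
      rw [h1, h2, ih hn', List.replicate_succ]
      rfl

lemma digits_prod (n : ℕ) (hn : 1 ≤ n) :
    Nat.digits 10 (10 ^ (n + 1) - 6) = 4 :: List.replicate n 9 := by
  have hk : 1 ≤ 10 ^ n := Nat.one_le_pow _ _ (by norm_num)
  have h : 10 ^ (n + 1) - 6 = 4 + 10 * (10 ^ n - 1) := by
    rw [pow_succ]; omega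
  rw [h, Nat.digits_def' (by norm_num : 1 < 10) (by omega)]
  have h1 : (4 + 10 * (10 ^ n - 1)) % 10 = 4 := by omega
  have h2 : (4 + 10 * (10 ^ n - 1)) / 10 = 10 ^ n - 1 := by omega
  rw [h1, h2, digits_pow_sub_one]

theorem stmt_14 (n : ℕ) (hn : 1 ≤ n) :
    IsRSP 10 2 (5 * 10 ^ n - 3) ∧
    (Nat.digits 10 (2 + (5 * 10 ^ n - 3))).length = n + 1 := by
  have hk : 10 ≤ 10 ^ n := by
    calc 10 = 10 ^ 1 := (pow_one 10).symm
    _ ≤ 10 ^ n := Nat.pow_le_pow_right (by norm_num) hn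
  have hsum : 2 + (5 * 10 ^ n - 3) = 5 * 10 ^ n - 1 := by omega
  have hprod : 2 * (5 * 10 ^ n - 3) = 10 ^ (n + 1) - 6 := by
    rw [pow_succ]; omega
  refine ⟨⟨by norm_num, by omega, ?_⟩, ?_⟩
  · rw [hsum, hprod, digits_sum n hn, digits_prod n hn]
    simp
  · rw [hsum, digits_sum n hn]
    simp
end

section
/- Fix an integer a ≥ 2 and a positive integer T, and set β = (a²-1)·T + (a-1) and b = (T+1)·β + (a·T+1). Then a + b = (T+1)·β + (a·T + a + 1) and a·b = (a·T + a + 1)·β + (T+1); moreover if not (a = 2 and T ≤ 2), then 0 ≤ T+1, aT+1, aT+a+1 < β, so (a,b) is a reversed sum-product pair for base β whose sum and product each have exactly two base-β digits. -/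
lemma digits_two_aux (β d0 d1 : ℕ) (hβ : 1 < β) (h0 : d0 < β) (h1 : 0 < d1)
    (h1' : d1 < β) : Nat.digits β (d1 * β + d0) = [d0, d1] := by
  have hβ0 : 0 < β := by omega
  have hn : 0 < d1 * β + d0 := by positivity
  rw [Nat.digits_def' hβ hn]
  have hmod : (d1 * β + d0) % β = d0 := by
    rw [add_comm, Nat.add_mul_mod_self_right, Nat.mod_eq_of_lt h0]
  have hdiv : (d1 * β + d0) / β = d1 := by
    rw [add_comm, Nat.add_mul_div_right _ _ hβ0, Nat.div_eq_of_lt h0, Nat.zero_add]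
  rw [hmod, hdiv, Nat.digits_def' hβ h1, Nat.mod_eq_of_lt h1',
    Nat.div_eq_of_lt h1', Nat.digits_zero]

theorem stmt_16 (a T β b : ℕ) (ha : 2 ≤ a) (hT : 1 ≤ T)
    (hβ : β = (a ^ 2 - 1) * T + (a - 1))
    (hb : b = (T + 1) * β + (a * T + 1)) :
    a + b = (T + 1) * β + (a * T + a + 1) ∧
    a * b = (a * T + a + 1) * β + (T + 1) ∧
    (¬ (a = 2 ∧ T ≤ 2) →
      T + 1 < β ∧ a * T + 1 < β ∧ a * T + a + 1 < β ∧
      IsRSP β a b ∧ (Nat.digits β (a + b)).length = 2) := by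
  obtain ⟨c, rfl⟩ : ∃ c, a = c + 2 := ⟨a - 2, by omega⟩
  have hβ' : β = (c ^ 2 + 4 * c + 3) * T + (c + 1) := by
    have h1 : (c + 2) ^ 2 - 1 = c ^ 2 + 4 * c + 3 := by
      have : (c + 2) ^ 2 = c ^ 2 + 4 * c + 4 := by ring
      omega
    have h2 : c + 2 - 1 = c + 1 := by omega
    rw [hβ, h1, h2]
  clear hβ
  have hsum : (c + 2) + b = (T + 1) * β + ((c + 2) * T + (c + 2) + 1) := by
    rw [hb]; ring
  have hprod : (c + 2) * b = ((c + 2) * T + (c + 2) + 1) * β + (T + 1) := by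
    rw [hb, hβ']; ring
  refine ⟨hsum, hprod, fun h => ?_⟩
  have hkey : 2 < (c ^ 2 + 3 * c + 1) * T := by
    rcases Nat.eq_zero_or_pos c with rfl | hc
    · simp at h ⊢; omega
    · nlinarith
  have hd2 : (c + 2) * T + (c + 2) + 1 < β := by rw [hβ']; nlinarith
  have hd1 : (c + 2) * T + 1 < β := by omega
  have hd0 : T + 1 < β := by nlinarith [hβ']
  have hβ1 : 1 < β := by omega
  have hdsum : Nat.digits β ((c + 2) + b) = [(c + 2) * T + (c + 2) + 1, T + 1] := by
    rw [hsum]; exact digits_two_aux β _ _ hβ1 hd2 (by omega) hd0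
  have hdprod : Nat.digits β ((c + 2) * b) = [T + 1, (c + 2) * T + (c + 2) + 1] := by
    rw [hprod]; exact digits_two_aux β _ _ hβ1 hd0 (by omega) hd2
  refine ⟨hd0, hd1, hd2, ⟨by omega, ?_, ?_⟩, by rw [hdsum]; rfl⟩
  · rw [hb]; nlinarith
  · rw [hdsum, hdprod]; rfl
end

section
/- If β ≡ 2 (mod 3), then there is no interesting reversed sum-product pair (2, b) for base β; that is, the only reversed sum-product pair with a = 2 for such β is (2,2) (when β ≥ 5). -/
theorem Int.abs_le_one_of_abs_mul_lt {n m : ℤ} (hn : 0 < n) (h : |n * m| < 2 * n) : |m| ≤ 1 := by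
  rw [abs_mul, abs_of_pos hn, mul_comm] at h
  have := lt_of_mul_lt_mul_right h hn.le
  omega

theorem Int.exists_carry_of_add_four_eq_two_mul {N R R' H H' : ℤ} (hRN : R < N)
    (hR' : 0 ≤ R') (hR'N : R' < N) (hN : 3 < N + 2 * R)
    (h : R' + N * H' + 4 = 2 * (R + N * H)) :
    ∃ c, |c| ≤ 1 ∧ H' = 2 * H + c ∧ R' + 4 = 2 * R - N * c ∧ (c = -1 → R ≤ 1) := by
  have hc : N * (H' - 2 * H) = 2 * R - R' - 4 := by linear_combination h
  refine ⟨H' - 2 * H, ?_, by ring, by linear_combination h, fun hc₁ ↦ ?_⟩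
  · exact Int.abs_le_one_of_abs_mul_lt (n := N) (by omega)
      (by rw [hc, abs_lt]; constructor <;> omega)
  · rw [hc₁] at hc
    omega

theorem false_of_end_digits {β a₀ a₁ a₂ a₃ t d : ℤ} (hβ : β % 3 = 2)
    (ha₀ : 1 ≤ a₀) (ha₀β : a₀ < β) (ha₁ : 0 ≤ a₁) (ha₁β : a₁ < β)
    (ha₂ : 0 ≤ a₂) (ha₂β : a₂ < β) (ha₃ : 1 ≤ a₃) (ha₃β : a₃ < β)
    (ht : |t| ≤ 1) (hd : |d| ≤ 1) (hd₁ : d = -1 → a₀ ≤ 1)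
    (hlow : a₃ + β * a₂ + 4 = 2 * (a₀ + β * a₁) - β ^ 2 * t)
    (hhigh : a₁ + β * a₀ = 2 * (a₂ + β * a₃) + d) : False := by
  rw [abs_le] at ht hd
  have hβ₀ : 0 < β := by omega
  obtain ⟨M, hM⟩ : ∃ M, M = 2 * a₁ - a₂ - β * t := ⟨_, rfl⟩
  obtain ⟨K, hK⟩ : ∃ K, K = 2 * a₃ - a₀ := ⟨_, rfl⟩
  have hMβ : β * M = a₃ + 4 - 2 * a₀ := by rw [hM]; linear_combination -hlow
  have hKβ : β * K = a₁ - 2 * a₂ - d := by rw [hK]; linear_combination -hhigh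
  have hM₁ : |M| ≤ 1 := Int.abs_le_one_of_abs_mul_lt hβ₀ (by rw [hMβ, abs_lt]; omega)
  have hK₁ : |K| ≤ 1 := Int.abs_le_one_of_abs_mul_lt hβ₀ (by rw [hKβ, abs_lt]; omega)
  have h₃ : 3 * a₃ = 4 + 2 * K - β * M := by linear_combination hMβ - 2 * hK
  rw [abs_le] at hM₁ hK₁
  -- `h₃` mod 3, with `β ≡ -1`, leaves only these two cases
  have hKM : K = 1 ∧ M = 0 ∨ K = 0 ∧ M = -1 := by
    rcases (by omega : M = -1 ∨ M = 0 ∨ M = 1) with rfl | rfl | rfl <;>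
      rcases (by omega : K = -1 ∨ K = 0 ∨ K = 1) with rfl | rfl | rfl <;> omega
  have hd₀ : 0 ≤ d := by
    by_contra! hd₀
    have := hd₁ (by omega)
    rcases hKM with ⟨rfl, rfl⟩ | ⟨rfl, rfl⟩ <;> omega
  have h₁ : 3 * a₁ = 2 * M - d + 2 * (β * t) - β * K := by
    linear_combination hKβ - 2 * hM
  -- `h₁` forces `t = 1` and then `d ≡ 2 (mod 3)`
  rcases hKM with ⟨rfl, rfl⟩ | ⟨rfl, rfl⟩ <;>
    rcases (by omega : t = -1 ∨ t = 0 ∨ t = 1) with rfl | rfl | rfl <;> omega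

theorem Nat.mod_pow_eq_ofDigits_reverse_drop {b m n : ℕ} (hb : 2 ≤ b)
    (h : b.digits m = (b.digits n).reverse) (i : ℕ) :
    m % b ^ i = ofDigits b ((b.digits n).drop ((b.digits n).length - i)).reverse := by
  rw [Nat.self_mod_pow_eq_ofDigits_take _ _ hb, h, List.take_reverse]

theorem Nat.div_pow_eq_ofDigits_reverse_take {b m n : ℕ} (hb : 2 ≤ b)
    (h : b.digits m = (b.digits n).reverse) (i : ℕ) :
    m / b ^ i = ofDigits b ((b.digits n).take ((b.digits n).length - i)).reverse := by
  rw [Nat.self_div_pow_eq_ofDigits_drop _ _ hb, h, List.drop_reverse]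

theorem Nat.base_le_div_pow_of_length_digits {b n j : ℕ} (hb : 1 < b)
    (h : (b.digits n).length = j + 2) : b ≤ n / b ^ j := by
  have hn : n ≠ 0 := by rintro rfl; simp at h
  have := Nat.base_pow_length_digits_le b n hb hn
  rw [h, pow_succ'] at this
  rw [Nat.le_div_iff_mul_le (by positivity), ← pow_succ']
  exact Nat.le_of_mul_le_mul_left this (by omega : 0 < b)

theorem length_digits_ne_two {β s p : ℕ} (hβ : β % 3 = 2) (hsp : p + 4 = 2 * s)
    (hrev : β.digits p = (β.digits s).reverse) : (β.digits s).length ≠ 2 := by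
  intro hk
  obtain ⟨x, y, hxy⟩ := List.length_eq_two.mp hk
  have hs : s = x + β * y := by rw [← Nat.ofDigits_digits β s, hxy]; simp [Nat.ofDigits]
  have hp : p = y + β * x := by rw [← Nat.ofDigits_digits β p, hrev, hxy]; simp [Nat.ofDigits]
  -- mod 3, where `β ≡ -1`, reversal negates a two-digit number, so `3 s ≡ 4`
  have h₃ := congrArg (Nat.cast : ℕ → ZMod 3) hsp
  rw [hs, hp] at h₃
  push_cast at h₃
  rw [← ZMod.natCast_mod β 3, hβ] at h₃
  generalize (x : ZMod 3) = x at h₃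
  generalize (y : ZMod 3) = y at h₃
  revert x y
  decide

theorem Nat.exists_end_digits_of_digits_eq_reverse {b m n j : ℕ} (hb : 2 ≤ b)
    (h : b.digits m = (b.digits n).reverse) (hj : (b.digits n).length = j + 2) :
    ∃ a₀ a₁ a₂ a₃, a₀ < b ∧ a₁ < b ∧ a₂ < b ∧ a₃ < b ∧
      n % b ^ 2 = a₀ + b * a₁ ∧ n / b ^ j = a₂ + b * a₃ ∧
      m % b ^ 2 = a₃ + b * a₂ ∧ m / b ^ j = a₁ + b * a₀ := by
  set L := b.digits n with hL
  have hdig : ∀ x ∈ L, x < b := fun x hx ↦ Nat.digits_lt_base hb hx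
  obtain ⟨a₀, a₁, hlow⟩ := List.length_eq_two.mp (by simp [hj] : (L.take 2).length = 2)
  obtain ⟨a₂, a₃, hhigh⟩ := List.length_eq_two.mp (by simp [hj] : (L.drop j).length = 2)
  obtain ⟨ha₀, ha₁⟩ : a₀ < b ∧ a₁ < b := by
    simpa using fun x (hx : x ∈ [a₀, a₁]) ↦ hdig x (List.mem_of_mem_take (hlow ▸ hx))
  obtain ⟨ha₂, ha₃⟩ : a₂ < b ∧ a₃ < b := by
    simpa using fun x (hx : x ∈ [a₂, a₃]) ↦ hdig x (List.mem_of_mem_drop (hhigh ▸ hx))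
  refine ⟨a₀, a₁, a₂, a₃, ha₀, ha₁, ha₂, ha₃, ?_, ?_, ?_, ?_⟩
  · rw [Nat.self_mod_pow_eq_ofDigits_take _ _ hb, ← hL, hlow]; simp [Nat.ofDigits]
  · rw [Nat.self_div_pow_eq_ofDigits_drop _ _ hb, ← hL, hhigh]; simp [Nat.ofDigits]
  · rw [Nat.mod_pow_eq_ofDigits_reverse_drop hb h, ← hL, show L.length - 2 = j by omega, hhigh]
    simp [Nat.ofDigits]
  · rw [Nat.div_pow_eq_ofDigits_reverse_take hb h, ← hL, show L.length - j = 2 by omega, hlow]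
    simp [Nat.ofDigits]

theorem length_digits_lt_three {β s p : ℕ} (hβ : β % 3 = 2) (hsp : p + 4 = 2 * s)
    (hrev : β.digits p = (β.digits s).reverse) : (β.digits s).length < 3 := by
  have hβ₂ : 2 ≤ β := by omega
  by_contra! hk
  obtain ⟨j, hj⟩ : ∃ j, (β.digits s).length = j + 2 := ⟨_, (Nat.sub_add_cancel (by omega)).symm⟩
  obtain ⟨a₀, a₁, a₂, a₃, ha₀β, ha₁β, ha₂β, ha₃β, hs_low, hs_high, hp_low, hp_high⟩ :=
    Nat.exists_end_digits_of_digits_eq_reverse hβ₂ hrev hj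
  have ha₀ : 1 ≤ a₀ := by
    have hp := Nat.base_le_div_pow_of_length_digits (by omega)
      (by rw [hrev, List.length_reverse, hj] : (β.digits p).length = j + 2)
    rw [hp_high] at hp
    exact Nat.pos_of_ne_zero (by rintro rfl; omega)
  have ha₃ : 1 ≤ a₃ := by
    have hs := Nat.base_le_div_pow_of_length_digits (by omega) hj
    rw [hs_high] at hs
    exact Nat.pos_of_ne_zero (by rintro rfl; omega)
  have ha₀R : a₀ ≤ s % β ^ j := by
    have : s % β ^ 2 % β = s % β ^ j % β := by
      rw [Nat.mod_mod_of_dvd _ (dvd_pow_self β two_ne_zero),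
        Nat.mod_mod_of_dvd _ (dvd_pow_self β (by omega))]
    rw [hs_low, Nat.add_mul_mod_self_left, Nat.mod_eq_of_lt ha₀β] at this
    exact this ▸ Nat.mod_le _ _
  have hblock (N : ℕ) :
      ((p % N : ℕ) : ℤ) + N * (p / N : ℕ) + 4 = 2 * ((s % N : ℕ) + N * (s / N : ℕ)) := by
    exact_mod_cast (by rw [Nat.mod_add_div, Nat.mod_add_div]; exact hsp)
  have hβj : β ≤ β ^ j := Nat.le_self_pow (by omega) β
  obtain ⟨t, ht, -, hlow, -⟩ := Int.exists_carry_of_add_four_eq_two_mul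
    (by exact_mod_cast Nat.mod_lt _ (by positivity)) (by positivity)
    (by exact_mod_cast Nat.mod_lt _ (by positivity))
    (by have : 4 ≤ β ^ 2 := by nlinarith
        omega) (hblock (β ^ 2))
  obtain ⟨d, hd, hhigh, -, hd₁⟩ := Int.exists_carry_of_add_four_eq_two_mul
    (by exact_mod_cast Nat.mod_lt _ (by positivity)) (by positivity)
    (by exact_mod_cast Nat.mod_lt _ (by positivity)) (by omega) (hblock (β ^ j))
  rw [hs_low, hp_low] at hlow
  rw [hs_high, hp_high] at hhigh
  push_cast at hlow hhigh
  exact false_of_end_digits (by exact_mod_cast hβ) (mod_cast ha₀) (mod_cast ha₀β)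
    (by positivity) (mod_cast ha₁β) (by positivity) (mod_cast ha₂β) (mod_cast ha₃)
    (mod_cast ha₃β) ht hd (fun h ↦ by have := hd₁ h; omega) hlow hhigh

theorem length_digits_eq_one {β s p : ℕ} (hβ : β % 3 = 2) (hsp : p + 4 = 2 * s)
    (hrev : β.digits p = (β.digits s).reverse) : (β.digits s).length = 1 := by
  have hs : β.digits s ≠ [] := Nat.digits_ne_nil_iff_ne_zero.mpr (by omega)
  have := List.length_pos_iff.mpr hs
  have := length_digits_ne_two hβ hsp hrev
  have := length_digits_lt_three hβ hsp hrev
  omega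

theorem eq_two_of_isRSP_two {β b : ℕ} (hβ : β % 3 = 2) (h : IsRSP β 2 b) : b = 2 ∧ 4 < β := by
  obtain ⟨-, -, hrev⟩ := h
  obtain ⟨x, hx⟩ := List.length_eq_one_iff.mp (length_digits_eq_one hβ (by omega) hrev)
  have hs : 2 + b = x := by rw [← Nat.ofDigits_digits β (2 + b), hx]; simp
  have hp : 2 * b = x := by rw [← Nat.ofDigits_digits β (2 * b), hrev, hx]; simp
  have hxβ : x < β := Nat.digits_lt_base (by omega) (by simp [hx] : x ∈ β.digits (2 + b))
  omega

theorem stmt_19_general (β : ℕ) (hmod : β % 3 = 2) :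
    (∀ b, IsRSP β 2 b → b < β) ∧ (5 ≤ β → ∀ b, IsRSP β 2 b → b = 2) :=
  ⟨fun _ h ↦ by have := eq_two_of_isRSP_two hmod h; omega,
    fun _ _ h ↦ (eq_two_of_isRSP_two hmod h).1⟩

theorem stmt_19 (β : ℕ) (hβ : 2 ≤ β) (hmod : β % 3 = 2) :
    (∀ b, IsRSP β 2 b → b < β) ∧ (5 ≤ β → ∀ b, IsRSP β 2 b → b = 2) :=
  stmt_19_general β hmod
end
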